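/- arXiv:2511.06502 — 3 statements merged into one kernel-verified Lean document; each statement's English description precedes it below -/
import Mathlib

section
/- Every morphism [f] : (X,R) → (Y,S) in the exact completion C_ex of a weakly lex Pos-enriched category factors as an so-morphism followed by an order-monomorphism: taking I the weak limit over (f, f, s₀, s₁), one has [f] = ([f] : (X,I) → (Y,S)) ∘ ([1_X] : (X,R) → (X,I)), where [1_X] is an effective epimorphism (the coinserter of its kernel congruence) and [f] : (X,I) → (Y,S) is an order-monomorphism. -/
open CategoryTheory

universe w v u v' u' v'' u''

/-- A `Pos`-enriched category: each hom-set carries a partial order and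
composition is monotone in both variables. -/
class PosEnriched (C : Type u) [Category.{v} C] where
  homOrder : ∀ X Y : C, PartialOrder (X ⟶ Y)
  comp_mono : ∀ {X Y Z : C} {f f' : X ⟶ Y} {g g' : Y ⟶ Z},
    (homOrder X Y).le f f' → (homOrder Y Z).le g g' → (homOrder X Z).le (f ≫ g) (f' ≫ g')

attribute [instance] PosEnriched.homOrder

namespace PosEnr

variable {C : Type u} [Category.{v} C] [PosEnriched C]

theorem comp_mono' {X Y Z : C} {f f' : X ⟶ Y} {g g' : Y ⟶ Z} (h : f ≤ f') (h' : g ≤ g') :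
    f ≫ g ≤ f' ≫ g' := PosEnriched.comp_mono h h'

/-- `m` is an order-monomorphism (ff-morphism): postcomposition reflects the order
(hence, by antisymmetry, is also injective). -/
def OrderMono {X Y : C} (m : X ⟶ Y) : Prop :=
  ∀ {Z : C} (u v : Z ⟶ X), u ≫ m ≤ v ≫ m → u ≤ v

/-- `e` is an so-morphism: it is left orthogonal, in the `Pos`-enriched sense, to all
order-monomorphisms (the relevant square of hom-posets is a pullback in `Pos`). -/
def IsSo {A B : C} (e : A ⟶ B) : Prop :=
  ∀ {X Y : C} (m : X ⟶ Y), OrderMono m →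
    (∀ (f : A ⟶ X) (g : B ⟶ Y), f ≫ m = e ≫ g → ∃ h : B ⟶ X, e ≫ h = f ∧ h ≫ m = g) ∧
    (∀ h h' : B ⟶ X, e ≫ h ≤ e ≫ h' → h ≫ m ≤ h' ≫ m → h ≤ h')

/-- `e : I ⟶ X` is the (conical, `Pos`-enriched) inserter of the ordered pair `(f, g)`. -/
def IsInserterP {X Y I : C} (f g : X ⟶ Y) (e : I ⟶ X) : Prop :=
  e ≫ f ≤ e ≫ g ∧
  (∀ {Z : C} (h : Z ⟶ X), h ≫ f ≤ h ≫ g → ∃ u : Z ⟶ I, u ≫ e = h) ∧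
  OrderMono e

/-- A weak inserter: only the existence part of the universal property. -/
def IsWeakInserter {X Y I : C} (f g : X ⟶ Y) (e : I ⟶ X) : Prop :=
  e ≫ f ≤ e ≫ g ∧
  (∀ {Z : C} (h : Z ⟶ X), h ≫ f ≤ h ≫ g → ∃ u : Z ⟶ I, u ≫ e = h)

/-- `q : Y ⟶ Q` is the coinserter of the ordered pair `(u, v)`. -/
def IsCoinserterP {X Y Q : C} (u v : X ⟶ Y) (q : Y ⟶ Q) : Prop :=
  u ≫ q ≤ v ≫ q ∧
  (∀ {Z : C} (h : Y ⟶ Z), u ≫ h ≤ v ≫ h → ∃ t : Q ⟶ Z, q ≫ t = h) ∧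
  (∀ {Z : C} (h h' : Q ⟶ Z), q ≫ h ≤ q ≫ h' → h ≤ h')

/-- `(c0, c1)` is the comma object (lax pullback) of the ordered pair `(f, g)`. -/
def IsCommaP {X Y Z P : C} (f : X ⟶ Z) (g : Y ⟶ Z) (c0 : P ⟶ X) (c1 : P ⟶ Y) : Prop :=
  c0 ≫ f ≤ c1 ≫ g ∧
  (∀ {A : C} (u0 : A ⟶ X) (u1 : A ⟶ Y), u0 ≫ f ≤ u1 ≫ g →
      ∃ w : A ⟶ P, w ≫ c0 = u0 ∧ w ≫ c1 = u1) ∧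
  (∀ {A : C} (w w' : A ⟶ P), w ≫ c0 ≤ w' ≫ c0 → w ≫ c1 ≤ w' ≫ c1 → w ≤ w')

/-- An effective epimorphism: a coinserter of some pair. -/
def EffectiveEpiP {Y Q : C} (q : Y ⟶ Q) : Prop :=
  ∃ (X : C) (u v : X ⟶ Y), IsCoinserterP u v q

/-- Binary product in the `Pos`-enriched (conical) sense. -/
def IsBinProdP {X Y P : C} (p : P ⟶ X) (q : P ⟶ Y) : Prop :=
  (∀ {Z : C} (f : Z ⟶ X) (g : Z ⟶ Y), ∃ h : Z ⟶ P, h ≫ p = f ∧ h ≫ q = g) ∧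
  (∀ {Z : C} (h h' : Z ⟶ P), h ≫ p ≤ h' ≫ p → h ≫ q ≤ h' ≫ q → h ≤ h')

/-- Terminal object in the `Pos`-enriched sense. -/
def IsTerminalP (T : C) : Prop :=
  ∀ X : C, ∃ f : X ⟶ T, ∀ g : X ⟶ T, g = f

/-- Product of a (possibly infinite) family in the `Pos`-enriched sense. -/
def IsProdFamP {ι : Type w} (X : ι → C) (P : C) (p : ∀ i, P ⟶ X i) : Prop :=
  (∀ {Z : C} (f : ∀ i, Z ⟶ X i), ∃ h : Z ⟶ P, ∀ i, h ≫ p i = f i) ∧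
  (∀ {Z : C} (h h' : Z ⟶ P), (∀ i, h ≫ p i ≤ h' ≫ p i) → h ≤ h')

/-- Weak product of a family: only the existence part. -/
def IsWeakProdFam {ι : Type w} (X : ι → C) (P : C) (p : ∀ i, P ⟶ X i) : Prop :=
  ∀ {Z : C} (f : ∀ i, Z ⟶ X i), ∃ h : Z ⟶ P, ∀ i, h ≫ p i = f i

/-- Pullback in the `Pos`-enriched (conical) sense. -/
def IsPullbackP {X Y Z P : C} (f : X ⟶ Z) (g : Y ⟶ Z) (p0 : P ⟶ X) (p1 : P ⟶ Y) : Prop :=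
  p0 ≫ f = p1 ≫ g ∧
  (∀ {A : C} (u0 : A ⟶ X) (u1 : A ⟶ Y), u0 ≫ f = u1 ≫ g →
      ∃ w : A ⟶ P, w ≫ p0 = u0 ∧ w ≫ p1 = u1) ∧
  (∀ {A : C} (w w' : A ⟶ P), w ≫ p0 ≤ w' ≫ p0 → w ≫ p1 ≤ w' ≫ p1 → w ≤ w')

/-- A congruence, given by a jointly order-monic pair which is order-reflexive and
transitive (in terms of generalized elements). -/
def IsCongPair {S X : C} (s0 s1 : S ⟶ X) : Prop :=
  (∀ {A : C} (u v : A ⟶ S), u ≫ s0 ≤ v ≫ s0 → u ≫ s1 ≤ v ≫ s1 → u ≤ v) ∧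
  (∀ {A : C} (a0 a1 : A ⟶ X), a0 ≤ a1 → ∃ u : A ⟶ S, u ≫ s0 = a0 ∧ u ≫ s1 = a1) ∧
  (∀ {A : C} (u v : A ⟶ S), u ≫ s1 = v ≫ s0 →
      ∃ t : A ⟶ S, t ≫ s0 = u ≫ s0 ∧ t ≫ s1 = v ≫ s1)

/-- An so-projective object: its covariant hom-functor to `Pos` preserves so-morphisms
(equivalently, sends them to surjections). -/
def SoProjective (P : C) : Prop :=
  ∀ {A B : C} (e : A ⟶ B), IsSo e → ∀ f : P ⟶ B, ∃ g : P ⟶ A, g ≫ e = f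

end PosEnr

/-- A weight `W : D ⥤ Pos` for `Pos`-enriched weighted limits, given concretely. -/
structure PosWeight (D : Type u') [Category.{v'} D] [PosEnriched D] where
  obj : D → Type
  po : ∀ d, PartialOrder (obj d)
  map : ∀ {d d' : D}, (d ⟶ d') → obj d → obj d'
  map_monotone : ∀ {d d' : D} (f : d ⟶ d') (x y : obj d),
    (po d).le x y → (po d').le (map f x) (map f y)
  map_id : ∀ (d : D) (x : obj d), map (𝟙 d) x = x
  map_comp : ∀ {d d' d'' : D} (f : d ⟶ d') (g : d' ⟶ d'') (x : obj d),
    map (f ≫ g) x = map g (map f x)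
  map_le : ∀ {d d' : D} {f g : d ⟶ d'}, f ≤ g → ∀ x : obj d, (po d').le (map f x) (map g x)

attribute [instance] PosWeight.po

/-- A finite weight: finitely many objects, finite hom-posets, finite values. -/
def PosWeight.IsFiniteWeight {D : Type u'} [Category.{v'} D] [PosEnriched D]
    (W : PosWeight D) : Prop :=
  Finite D ∧ (∀ d d' : D, Finite (d ⟶ d')) ∧ ∀ d, Finite (W.obj d)

/-- A `Pos`-enriched (locally monotone) functor. -/
structure PosFunctor (C : Type u) (E : Type u') [Category.{v} C] [Category.{v'} E]
    [PosEnriched C] [PosEnriched E] where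
  toFunctor : C ⥤ E
  map_le : ∀ {X Y : C} {f g : X ⟶ Y}, f ≤ g → toFunctor.map f ≤ toFunctor.map g

/-- Composition of `Pos`-enriched functors. -/
def PosFunctor.comp {D : Type u''} {C : Type u} {E : Type u'}
    [Category.{v''} D] [Category.{v} C] [Category.{v'} E]
    [PosEnriched D] [PosEnriched C] [PosEnriched E]
    (G : PosFunctor D C) (F : PosFunctor C E) : PosFunctor D E where
  toFunctor := G.toFunctor ⋙ F.toFunctor
  map_le h := F.map_le (G.map_le h)

/-- A cylinder (`Pos`-natural transformation) `W ⟶ C(L, F-)`. -/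
structure Cylinder {D : Type u'} [Category.{v'} D] [PosEnriched D] (W : PosWeight D)
    {E : Type u} [Category.{v} E] [PosEnriched E] (F : PosFunctor D E) (L : E) where
  app : ∀ d : D, W.obj d → (L ⟶ F.toFunctor.obj d)
  monotone : ∀ (d : D) (x y : W.obj d), (W.po d).le x y → app d x ≤ app d y
  naturality : ∀ {d d' : D} (f : d ⟶ d') (x : W.obj d),
    app d x ≫ F.toFunctor.map f = app d' (W.map f x)

/-- The image of a cylinder under a `Pos`-enriched functor. -/
def Cylinder.mapF {D : Type u''} {C : Type u} {E : Type u'}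
    [Category.{v''} D] [Category.{v} C] [Category.{v'} E]
    [PosEnriched D] [PosEnriched C] [PosEnriched E]
    {W : PosWeight D} {G : PosFunctor D C} {L : C}
    (F : PosFunctor C E) (c : Cylinder W G L) :
    Cylinder W (G.comp F) (F.toFunctor.obj L) where
  app d x := F.toFunctor.map (c.app d x)
  monotone d x y h := F.map_le (c.monotone d x y h)
  naturality f x := by
    show F.toFunctor.map _ ≫ F.toFunctor.map _ = _
    rw [← F.toFunctor.map_comp, c.naturality]

/-- `L` with cylinder `c` is a weak `W`-weighted limit of `F`:
the induced comparison maps on hom-posets are surjective. -/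
def IsWeakWeightedLimitP {D : Type u'} [Category.{v'} D] [PosEnriched D] (W : PosWeight D)
    {E : Type u} [Category.{v} E] [PosEnriched E] (F : PosFunctor D E)
    (L : E) (c : Cylinder W F L) : Prop :=
  ∀ (Z : E) (φ : Cylinder W F Z), ∃ h : Z ⟶ L, ∀ (d : D) (x : W.obj d),
    h ≫ c.app d x = φ.app d x

/-- `L` with cylinder `c` is a (strong) `W`-weighted limit of `F`. -/
def IsWeightedLimitP {D : Type u'} [Category.{v'} D] [PosEnriched D] (W : PosWeight D)
    {E : Type u} [Category.{v} E] [PosEnriched E] (F : PosFunctor D E)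
    (L : E) (c : Cylinder W F L) : Prop :=
  IsWeakWeightedLimitP W F L c ∧
  ∀ (Z : E) (h h' : Z ⟶ L), (∀ (d : D) (x : W.obj d), h ≫ c.app d x ≤ h' ≫ c.app d x) → h ≤ h'

/-- A weakly lex `Pos`-category: all weak finite weighted limits exist. -/
def WeaklyLex (C : Type u) [Category.{v} C] [PosEnriched C] : Prop :=
  ∀ (D : Type) [SmallCategory D] [PosEnriched D] (W : PosWeight D) (F : PosFunctor D C),
    W.IsFiniteWeight → ∃ (L : C) (c : Cylinder W F L), IsWeakWeightedLimitP W F L c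

/-- All finite weighted limits exist (in the strong sense). -/
def HasFiniteWeightedLimitsP (C : Type u) [Category.{v} C] [PosEnriched C] : Prop :=
  ∀ (D : Type) [SmallCategory D] [PosEnriched D] (W : PosWeight D) (F : PosFunctor D C),
    W.IsFiniteWeight → ∃ (L : C) (c : Cylinder W F L), IsWeightedLimitP W F L c

open PosEnr

/-- A regular `Pos`-enriched category. -/
def IsRegularCat (C : Type u) [Category.{v} C] [PosEnriched C] : Prop :=
  HasFiniteWeightedLimitsP C ∧
  (∀ {X Y : C} (f : X ⟶ Y), ∃ (I : C) (e : X ⟶ I) (m : I ⟶ Y),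
      IsSo e ∧ OrderMono m ∧ e ≫ m = f) ∧
  (∀ {X Y Z P : C} (f : X ⟶ Z) (g : Y ⟶ Z) (p0 : P ⟶ X) (p1 : P ⟶ Y),
      IsPullbackP f g p0 p1 → IsSo f → IsSo p1)

/-- An exact `Pos`-enriched category: regular, and every congruence is effective,
i.e. is the kernel congruence (comma object `q/q`) of some morphism. -/
def IsExactCat (C : Type u) [Category.{v} C] [PosEnriched C] : Prop :=
  IsRegularCat C ∧
  ∀ {S X : C} (s0 s1 : S ⟶ X), IsCongPair s0 s1 →
    ∃ (Q : C) (q : X ⟶ Q), IsCommaP q q s0 s1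

/-- Fully order-faithful: full and order-reflecting (hence faithful) on hom-posets. -/
def FullyOrderFaithful {C : Type u} {E : Type u'} [Category.{v} C] [Category.{v'} E]
    [PosEnriched C] [PosEnriched E] (F : PosFunctor C E) : Prop :=
  (∀ {X Y : C} (g : F.toFunctor.obj X ⟶ F.toFunctor.obj Y), ∃ f : X ⟶ Y, F.toFunctor.map f = g) ∧
  (∀ {X Y : C} (f g : X ⟶ Y), F.toFunctor.map f ≤ F.toFunctor.map g → f ≤ g)

/-- An equivalence of `Pos`-enriched categories. -/
def IsEquivP {C : Type u} {E : Type u'} [Category.{v} C] [Category.{v'} E]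
    [PosEnriched C] [PosEnriched E] (F : PosFunctor C E) : Prop :=
  FullyOrderFaithful F ∧ ∀ Y : E, ∃ X : C, Nonempty (F.toFunctor.obj X ≅ Y)

/-- Preservation of all finite weighted limits by a `Pos`-enriched functor. -/
def PreservesFiniteWeightedLimitsP {C : Type u} {E : Type u'} [Category.{v} C] [Category.{v'} E]
    [PosEnriched C] [PosEnriched E] (F : PosFunctor C E) : Prop :=
  ∀ (D : Type) [SmallCategory D] [PosEnriched D] (W : PosWeight D), W.IsFiniteWeight →
    ∀ (G : PosFunctor D C) (L : C) (c : Cylinder W G L),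
      IsWeightedLimitP W G L c →
      IsWeightedLimitP W (G.comp F) (F.toFunctor.obj L) (c.mapF F)

/-- A regular `Pos`-enriched functor: preserves finite weighted limits and effective
epimorphisms. -/
def IsRegularFunctor {C : Type u} {E : Type u'} [Category.{v} C] [Category.{v'} E]
    [PosEnriched C] [PosEnriched E] (F : PosFunctor C E) : Prop :=
  PreservesFiniteWeightedLimitsP F ∧
  ∀ {X Y : C} (e : X ⟶ Y), EffectiveEpiP e → EffectiveEpiP (F.toFunctor.map e)

/-- A left covering functor: for every weak finite weighted limit in the domain, any
comparison morphism into the corresponding (strong) limit in the codomain is an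
effective epimorphism. -/
def LeftCovering {C : Type u} {E : Type u'} [Category.{v} C] [Category.{v'} E]
    [PosEnriched C] [PosEnriched E] (F : PosFunctor C E) : Prop :=
  ∀ (D : Type) [SmallCategory D] [PosEnriched D] (W : PosWeight D), W.IsFiniteWeight →
    ∀ (G : PosFunctor D C) (L : C) (c : Cylinder W G L), IsWeakWeightedLimitP W G L c →
    ∀ (L' : E) (c' : Cylinder W (G.comp F) L'), IsWeightedLimitP W (G.comp F) L' c' →
    ∀ h : F.toFunctor.obj L ⟶ L', (∀ (d : D) (x : W.obj d),
        h ≫ c'.app d x = F.toFunctor.map (c.app d x)) →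
      EffectiveEpiP h

/-- The full subcategory of a `Pos`-enriched category is `Pos`-enriched. -/
instance fullSubPosEnriched {C : Type u} [Category.{v} C] [PosEnriched C] (Z : C → Prop) :
    PosEnriched (ObjectProperty.FullSubcategory Z) where
  homOrder X Y := @PartialOrder.lift _ _ (PosEnriched.homOrder X.obj Y.obj)
    (fun f => f.hom) (fun _ _ h => InducedCategory.hom_ext h)
  comp_mono h h' := PosEnriched.comp_mono h h'

/-! ## The exact completion -/

open PosEnr

/-- A pseudocongruence in a `Pos`-enriched category: an order-reflexive and transitive
parallel pair. These are the objects of the exact completion. -/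
structure ExObj (C : Type u) [Category.{v} C] [PosEnriched C] where
  X : C
  R : C
  r0 : R ⟶ X
  r1 : R ⟶ X
  orefl : ∀ {A : C} (a0 a1 : A ⟶ X), a0 ≤ a1 → ∃ u : A ⟶ R, u ≫ r0 = a0 ∧ u ≫ r1 = a1
  tra : ∀ {A : C} (u v : A ⟶ R), u ≫ r1 = v ≫ r0 →
    ∃ t : A ⟶ R, t ≫ r0 = u ≫ r0 ∧ t ≫ r1 = v ≫ r1

namespace ExObj

variable {C : Type u} [Category.{v} C] [PosEnriched C]

/-- `f : X ⟶ Y` is compatible from `(X,R)` to `(Y,S)`. -/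
def Compat (A B : ExObj C) (f : A.X ⟶ B.X) : Prop :=
  ∃ fb : A.R ⟶ B.R, fb ≫ B.r0 = A.r0 ≫ f ∧ fb ≫ B.r1 = A.r1 ≫ f

/-- The preorder `f ≼ g` on compatible morphisms, given by factoring `(f,g)` through
the codomain pseudocongruence. -/
def Pre (A B : ExObj C) (f g : A.X ⟶ B.X) : Prop :=
  ∃ s : A.X ⟶ B.R, s ≫ B.r0 = f ∧ s ≫ B.r1 = g

theorem Pre.refl (A B : ExObj C) (f : A.X ⟶ B.X) : Pre A B f f := by
  obtain ⟨u, h0, h1⟩ := B.orefl f f le_rfl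
  exact ⟨u, h0, h1⟩

theorem Pre.trans' {A B : ExObj C} {f g h : A.X ⟶ B.X}
    (h1 : Pre A B f g) (h2 : Pre A B g h) : Pre A B f h := by
  obtain ⟨s, hs0, hs1⟩ := h1
  obtain ⟨t, ht0, ht1⟩ := h2
  obtain ⟨w, hw0, hw1⟩ := B.tra s t (by rw [hs1, ht0])
  exact ⟨w, by rw [hw0, hs0], by rw [hw1, ht1]⟩

theorem Compat.comp {A B D : ExObj C} {f : A.X ⟶ B.X} {g : B.X ⟶ D.X}
    (hf : Compat A B f) (hg : Compat B D g) : Compat A D (f ≫ g) := by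
  obtain ⟨fb, h0, h1⟩ := hf
  obtain ⟨gb, k0, k1⟩ := hg
  refine ⟨fb ≫ gb, ?_, ?_⟩
  · rw [Category.assoc, k0, ← Category.assoc, h0, Category.assoc]
  · rw [Category.assoc, k1, ← Category.assoc, h1, Category.assoc]

theorem Pre.comp_left {A B D : ExObj C} {f f' : A.X ⟶ B.X} (g : B.X ⟶ D.X)
    (hg : Compat B D g) (h : Pre A B f f') : Pre A D (f ≫ g) (f' ≫ g) := by
  obtain ⟨s, hs0, hs1⟩ := h
  obtain ⟨gb, k0, k1⟩ := hg
  refine ⟨s ≫ gb, ?_, ?_⟩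
  · rw [Category.assoc, k0, ← Category.assoc, hs0]
  · rw [Category.assoc, k1, ← Category.assoc, hs1]

theorem Pre.comp_right {A B D : ExObj C} (f : A.X ⟶ B.X) {g g' : B.X ⟶ D.X}
    (h : Pre B D g g') : Pre A D (f ≫ g) (f ≫ g') := by
  obtain ⟨s, hs0, hs1⟩ := h
  exact ⟨f ≫ s, by rw [Category.assoc, hs0], by rw [Category.assoc, hs1]⟩

theorem Pre.compCongr {A B D : ExObj C} {f f' : A.X ⟶ B.X} {g g' : B.X ⟶ D.X}
    (hg : Compat B D g) (h1 : Pre A B f f') (h2 : Pre B D g g') :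
    Pre A D (f ≫ g) (f' ≫ g') :=
  (Pre.comp_left g hg h1).trans' (Pre.comp_right f' h2)

/-- The equivalence relation on compatible morphisms. -/
def exSetoid (A B : ExObj C) : Setoid {f : A.X ⟶ B.X // Compat A B f} where
  r f g := Pre A B f.1 g.1 ∧ Pre A B g.1 f.1
  iseqv := ⟨fun f => ⟨Pre.refl A B f.1, Pre.refl A B f.1⟩, fun h => ⟨h.2, h.1⟩,
    fun h1 h2 => ⟨h1.1.trans' h2.1, h2.2.trans' h1.2⟩⟩

/-- The exact completion `C_ex` as a category: objects are pseudocongruences, morphisms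
are equivalence classes of compatible morphisms. -/
instance exCategory : Category (ExObj C) where
  Hom A B := Quotient (exSetoid A B)
  id A := Quotient.mk _ ⟨𝟙 A.X, ⟨𝟙 A.R, by simp, by simp⟩⟩
  comp {A B D} f g :=
    Quotient.liftOn₂ f g (fun f g => Quotient.mk _ ⟨f.1 ≫ g.1, f.2.comp g.2⟩)
      (fun a b a' b' ha hb => Quotient.sound
        ⟨Pre.compCongr b.2 ha.1 hb.1, Pre.compCongr b'.2 ha.2 hb.2⟩)
  id_comp {A B} f := Quotient.inductionOn f fun f => Quotient.sound (by
    constructor <;> · simp only [Category.id_comp]; exact Pre.refl A B f.1)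
  comp_id {A B} f := Quotient.inductionOn f fun f => Quotient.sound (by
    constructor <;> · simp only [Category.comp_id]; exact Pre.refl A B f.1)
  assoc {A B D E} f g h := Quotient.inductionOn₃ f g h fun f g h => Quotient.sound (by
    constructor <;> · simp only [Category.assoc]; exact Pre.refl A E _)

/-- The `Pos`-enrichment of the exact completion. -/
instance exPosEnriched : PosEnriched (ExObj C) where
  homOrder A B :=
    { le := fun f g => Quotient.liftOn₂ f g (fun f g => Pre A B f.1 g.1)
        (fun a b a' b' ha hb => propext
          ⟨fun h => (ha.2.trans' h).trans' hb.1, fun h => (ha.1.trans' h).trans' hb.2⟩)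
      le_refl := fun f => Quotient.inductionOn f fun f => Pre.refl A B f.1
      le_trans := fun f g h => Quotient.inductionOn₃ f g h
        (fun f g h h1 h2 => Pre.trans' h1 h2)
      le_antisymm := fun f g => Quotient.inductionOn₂ f g
        (fun f g h1 h2 => Quotient.sound ⟨h1, h2⟩) }
  comp_mono {A B D} {f f'} {g g'} h h' := by
    revert h h'
    refine Quotient.inductionOn₂ f f' (fun a a' => Quotient.inductionOn₂ g g'
      (fun b b' h h' => ?_))
    exact Pre.compCongr b.2 h h'

end ExObj

/-! ## The canonical embedding `Γ : C → C_ex` -/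

namespace ExObj

variable {C : Type u} [Category.{v} C] [PosEnriched C]

variable (I : C → C) (i0 i1 : ∀ X : C, I X ⟶ X)

/-- The pseudocongruence `(X, I_X)` associated to a chosen weak comma object `I_X` of
`(1_X, 1_X)`. -/
def commaExObj (hle : ∀ X, i0 X ≤ i1 X)
    (hfac : ∀ (X : C) {A : C} (a0 a1 : A ⟶ X), a0 ≤ a1 →
      ∃ u : A ⟶ I X, u ≫ i0 X = a0 ∧ u ≫ i1 X = a1) (X : C) : ExObj C where
  X := X
  R := I X
  r0 := i0 X
  r1 := i1 X
  orefl a0 a1 h := hfac X a0 a1 h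
  tra u v huv := by
    refine hfac X _ _ ?_
    calc u ≫ i0 X ≤ u ≫ i1 X := PosEnriched.comp_mono le_rfl (hle X)
      _ = v ≫ i0 X := huv
      _ ≤ v ≫ i1 X := PosEnriched.comp_mono le_rfl (hle X)

/-- The canonical functor `Γ : C → C_ex`, `X ↦ (X, I_X)`, `f ↦ [f]`. -/
def GammaFunc (hle : ∀ X, i0 X ≤ i1 X)
    (hfac : ∀ (X : C) {A : C} (a0 a1 : A ⟶ X), a0 ≤ a1 →
      ∃ u : A ⟶ I X, u ≫ i0 X = a0 ∧ u ≫ i1 X = a1) : C ⥤ ExObj C where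
  obj X := commaExObj I i0 i1 hle hfac X
  map {X Y} f := Quotient.mk _ ⟨f, by
    obtain ⟨u, h0, h1⟩ := hfac Y (i0 X ≫ f) (i1 X ≫ f)
      (PosEnriched.comp_mono (hle X) le_rfl)
    exact ⟨u, h0, h1⟩⟩
  map_id X := Quotient.sound (by
    constructor <;> exact Pre.refl _ _ _)
  map_comp f g := Quotient.sound (by
    constructor <;> exact Pre.refl _ _ _)

/-- The canonical quotient morphism `[1_X] : Γ X → (X, R)` in `C_ex`. -/
def exQuot (hle : ∀ X, i0 X ≤ i1 X)
    (hfac : ∀ (X : C) {A : C} (a0 a1 : A ⟶ X), a0 ≤ a1 →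
      ∃ u : A ⟶ I X, u ≫ i0 X = a0 ∧ u ≫ i1 X = a1) (A : ExObj C) :
    (GammaFunc I i0 i1 hle hfac).obj A.X ⟶ A :=
  Quotient.mk _ ⟨𝟙 A.X, by
    obtain ⟨u, h0, h1⟩ := A.orefl (i0 A.X) (i1 A.X) (hle A.X)
    exact ⟨u, by simpa [GammaFunc, commaExObj] using h0, by simpa [GammaFunc, commaExObj] using h1⟩⟩

end ExObj

/-!
The image of `[f] : (X, R) ⟶ (Y, S)` is `(X, I)` with `I` a weak limit of the cospans
`(f, s₀)` and `(f, s₁)`: by weak universality, `x₀, x₁ : W ⟶ X` are `I`-related exactly when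
`x₀ ≫ f` and `x₁ ≫ f` are `S`-related, so `[f] : (X, I) ⟶ (Y, S)` reflects the order.
Pulling `R` back in the same way along both legs `i₀, i₁ : I ⟶ X` gives the kernel congruence
`(I, K)` of `e = [1_X] : (X, R) ⟶ (X, I)`. A morphism `[h]` out of `(X, R)` satisfies
`[i₀] ≫ [h] ≤ [i₁] ≫ [h]` exactly when `h` is compatible with `I`, i.e. when `[h]` factors
through `e`; so `e` is the coinserter of its kernel congruence, and coinserters are so-morphisms.
-/

open Limits

abbrev discretePosEnriched (D : Type u') [Category.{v'} D] : PosEnriched D where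
  homOrder _ _ :=
    { le := Eq
      le_refl := Eq.refl
      le_trans := fun _ _ _ => Eq.trans
      le_antisymm := fun _ _ h _ => h }
  comp_mono := by rintro _ _ _ _ _ _ _ rfl rfl; rfl

def PosWeight.unit (D : Type u') [Category.{v'} D] [PosEnriched D] : PosWeight D where
  obj _ := PUnit
  po _ := inferInstance
  map _ x := x
  map_monotone _ _ _ h := h
  map_id _ _ := rfl
  map_comp _ _ _ := rfl
  map_le _ x := le_refl x

section

variable {C : Type u} [Category.{v} C] [PosEnriched C]

theorem PosEnr.IsCoinserterP.isSo {K A Q : C} {k0 k1 : K ⟶ A} {e : A ⟶ Q}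
    (h : IsCoinserterP k0 k1 e) : IsSo e := by
  obtain ⟨hle, hfac, hrefl⟩ := h
  refine fun m hm => ⟨fun u g hug => ?_, fun h h' hle' _ => hrefl h h' hle'⟩
  have hu : k0 ≫ u ≤ k1 ≫ u := hm _ _ <| by
    simpa only [Category.assoc, hug] using comp_mono' hle (le_refl g)
  obtain ⟨t, ht⟩ := hfac u hu
  have htm : e ≫ t ≫ m = e ≫ g := by rw [← Category.assoc, ht, hug]
  exact ⟨t, ht, le_antisymm (hrefl _ _ htm.le) (hrefl _ _ htm.ge)⟩

theorem WeaklyLex.exists_weakLimit (hC : WeaklyLex C) {D : Type} [SmallCategory D]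
    [FinCategory D] (F : D ⥤ C) :
    ∃ c : Cone F, ∀ c' : Cone F, ∃ h : c'.pt ⟶ c.pt, ∀ d, h ≫ c.π.app d = c'.π.app d := by
  let := discretePosEnriched D
  obtain ⟨L, c, hc⟩ := hC D (PosWeight.unit D) ⟨F, by rintro _ _ _ _ rfl; exact le_rfl⟩
    ⟨inferInstance, inferInstance, fun _ => inferInstanceAs (Finite PUnit)⟩
  refine ⟨⟨L, { app := fun d => c.app d PUnit.unit, naturality := fun d d' f => ?_ }⟩,
    fun c' => ?_⟩
  · exact (Category.id_comp _).trans (c.naturality f PUnit.unit).symm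
  · obtain ⟨h, hh⟩ := hc c'.pt ⟨fun d _ => c'.π.app d, fun _ _ _ _ => le_rfl, fun f _ => c'.w f⟩
    exact ⟨h, fun d => hh d _⟩

theorem WeaklyLex.exists_weakMultiequalizer (hC : WeaklyLex C) {J : MulticospanShape.{0, 0}}
    [Finite J.L] [Finite J.R] (I : MulticospanIndex J C) :
    ∃ K : Multifork I, ∀ K' : Multifork I, ∃ h : K'.pt ⟶ K.pt, ∀ a, h ≫ K.ι a = K'.ι a := by
  classical
  have := Fintype.ofFinite J.L
  have := Fintype.ofFinite J.R
  obtain ⟨K, hK⟩ := hC.exists_weakLimit I.multicospan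
  exact ⟨K, fun K' => (hK K').imp fun _ hh a => hh _⟩

end

namespace ExObj

variable {C : Type u} [Category.{v} C] [PosEnriched C]

def Rel (B : ExObj C) {W : C} (x y : W ⟶ B.X) : Prop :=
  ∃ s : W ⟶ B.R, s ≫ B.r0 = x ∧ s ≫ B.r1 = y

theorem rel_of_le (B : ExObj C) {W : C} {x y : W ⟶ B.X} (h : x ≤ y) : B.Rel x y :=
  B.orefl x y h

theorem Rel.trans {B : ExObj C} {W : C} {x y z : W ⟶ B.X} :
    B.Rel x y → B.Rel y z → B.Rel x z := by
  rintro ⟨s, rfl, hs⟩ ⟨t, ht, rfl⟩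
  exact B.tra s t (hs.trans ht.symm)

theorem compat_iff_rel {A B : ExObj C} {f : A.X ⟶ B.X} :
    Compat A B f ↔ B.Rel (A.r0 ≫ f) (A.r1 ≫ f) := Iff.rfl

def mkHom {A B : ExObj C} {f : A.X ⟶ B.X} (hf : Compat A B f) : A ⟶ B :=
  Quotient.mk _ ⟨f, hf⟩

theorem exists_eq_mkHom {A B : ExObj C} (u : A ⟶ B) :
    ∃ (f : A.X ⟶ B.X) (hf : Compat A B f), u = mkHom hf :=
  Quotient.inductionOn u fun ⟨f, hf⟩ => ⟨f, hf, rfl⟩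

theorem mkHom_le_mkHom_iff {A B : ExObj C} {f g : A.X ⟶ B.X} {hf : Compat A B f}
    {hg : Compat A B g} : mkHom hf ≤ mkHom hg ↔ B.Rel f g := Iff.rfl

theorem mkHom_comp_mkHom {A B D : ExObj C} {f : A.X ⟶ B.X} {g : B.X ⟶ D.X}
    (hf : Compat A B f) (hg : Compat B D g) :
    mkHom hf ≫ mkHom hg = mkHom (hf.comp hg) := rfl

theorem mkHom_comp_mkHom_of_eq {A B D : ExObj C} {f : A.X ⟶ B.X} {g : B.X ⟶ D.X}
    {k : A.X ⟶ D.X} (hf : Compat A B f) (hg : Compat B D g) (hk : Compat A D k)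
    (h : f ≫ g = k) : mkHom hf ≫ mkHom hg = mkHom hk := by
  subst h; rfl

def IsWeakComap (B : ExObj C) {J : Type*} {Z : C} (g : J → (Z ⟶ B.X)) {L : C}
    (l0 l1 : L ⟶ Z) : Prop :=
  ∀ {W : C} (u0 u1 : W ⟶ Z),
    (∃ h : W ⟶ L, h ≫ l0 = u0 ∧ h ≫ l1 = u1) ↔ ∀ j, B.Rel (u0 ≫ g j) (u1 ≫ g j)

namespace IsWeakComap

variable {B : ExObj C} {J : Type*} {Z : C} {g : J → (Z ⟶ B.X)} {L : C} {l0 l1 : L ⟶ Z}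

abbrev toExObj (hL : IsWeakComap B g l0 l1) : ExObj C where
  X := Z
  R := L
  r0 := l0
  r1 := l1
  orefl a0 a1 h := (hL a0 a1).2 fun _ => B.rel_of_le (comp_mono' h le_rfl)
  tra u v huv := (hL _ _).2 fun j => by
    have hu := (hL (u ≫ l0) (u ≫ l1)).1 ⟨u, rfl, rfl⟩ j
    have hv := (hL (v ≫ l0) (v ≫ l1)).1 ⟨v, rfl, rfl⟩ j
    exact hu.trans (huv ▸ hv)

theorem rel_toExObj_iff (hL : IsWeakComap B g l0 l1) {W : C} {u0 u1 : W ⟶ Z} :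
    hL.toExObj.Rel u0 u1 ↔ ∀ j, B.Rel (u0 ≫ g j) (u1 ≫ g j) := hL u0 u1

theorem compat_toExObj (hL : IsWeakComap B g l0 l1) (j : J) : Compat hL.toExObj B (g j) :=
  hL.rel_toExObj_iff.1 ⟨𝟙 L, Category.id_comp _, Category.id_comp _⟩ j

theorem compat_id {A : ExObj C} {g : J → (A.X ⟶ B.X)} {l0 l1 : L ⟶ A.X}
    (hL : IsWeakComap B g l0 l1) (hg : ∀ j, Compat A B (g j)) :
    Compat A hL.toExObj (𝟙 A.X) :=
  hL.rel_toExObj_iff.2 fun j => by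
    simpa only [Category.comp_id, Category.id_comp] using compat_iff_rel.1 (hg j)

theorem orderMono_mkHom {f : Z ⟶ B.X} (hL : IsWeakComap B (fun _ : Unit => f) l0 l1) :
    OrderMono (mkHom (hL.compat_toExObj ()) : hL.toExObj ⟶ B) := by
  intro W u v
  obtain ⟨u, hu, rfl⟩ := exists_eq_mkHom u
  obtain ⟨v, hv, rfl⟩ := exists_eq_mkHom v
  rw [mkHom_comp_mkHom, mkHom_comp_mkHom, mkHom_le_mkHom_iff, mkHom_le_mkHom_iff]
  exact fun h => hL.rel_toExObj_iff.2 fun _ => h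

end IsWeakComap

theorem _root_.WeaklyLex.exists_isWeakComap (hC : WeaklyLex C) (B : ExObj C) {J : Type}
    [Finite J] {Z : C} (g : J → (Z ⟶ B.X)) :
    ∃ (L : C) (l0 l1 : L ⟶ Z), IsWeakComap B g l0 l1 := by
  -- a multifork is `u₀, u₁ : W ⟶ Z`, `s j : W ⟶ B.R` with `u_i ≫ g j = s j ≫ r_i` for all `i, j`
  let I : MulticospanIndex ⟨Bool ⊕ J, Bool × J, fun b => .inl b.1, fun b => .inr b.2⟩ C :=
    { left := Sum.elim (fun _ => Z) (fun _ => B.R)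
      right := fun _ => B.X
      fst := fun b => g b.2
      snd := fun b => cond b.1 B.r1 B.r0 }
  obtain ⟨K, hK⟩ := hC.exists_weakMultiequalizer I
  refine ⟨K.pt, K.ι (.inl false), K.ι (.inl true), fun u0 u1 => ⟨?_, fun hu => ?_⟩⟩
  · rintro ⟨h, rfl, rfl⟩ j
    have hcond (i : Bool) := (Category.assoc _ _ _).trans <|
      (h ≫= K.condition (i, j)).symm.trans (Category.assoc _ _ _).symm
    exact ⟨h ≫ K.ι (.inr j), hcond false, hcond true⟩
  · choose s hs0 hs1 using hu
    let ι : ∀ a, _ ⟶ I.left a := fun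
      | .inl i => cond i u1 u0
      | .inr j => s j
    obtain ⟨h, hh⟩ := hK (Multifork.ofι I _ ι (by rintro ⟨_ | _, j⟩ <;> simp [ι, I, hs0, hs1]))
    exact ⟨h, hh (.inl false), hh (.inl true)⟩

section Kernel

variable {A B : ExObj C} {J : Type*} {g : J → (A.X ⟶ B.X)} {L : C} {l0 l1 : L ⟶ A.X}
  (hI : IsWeakComap B g l0 l1) (he : Compat A hI.toExObj (𝟙 A.X)) {KR : C} {m0 m1 : KR ⟶ L}
  (hK : IsWeakComap A ![l0, l1] m0 m1) (hk0 : Compat hK.toExObj A l0)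
  (hk1 : Compat hK.toExObj A l1)

theorem isCoinserterP_kernel :
    IsCoinserterP (mkHom hk0) (mkHom hk1) (mkHom he : A ⟶ hI.toExObj) := by
  refine ⟨⟨𝟙 L, by simp, by simp⟩, fun {Z} h hh => ?_, fun {Z} h h' hh => ?_⟩
  · obtain ⟨h, hc, rfl⟩ := exists_eq_mkHom h
    rw [mkHom_comp_mkHom, mkHom_comp_mkHom, mkHom_le_mkHom_iff] at hh
    exact ⟨mkHom (compat_iff_rel.2 hh), mkHom_comp_mkHom_of_eq _ _ _ (Category.id_comp h)⟩
  · obtain ⟨h, hc, rfl⟩ := exists_eq_mkHom h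
    obtain ⟨h', hc', rfl⟩ := exists_eq_mkHom h'
    rw [mkHom_comp_mkHom, mkHom_comp_mkHom, mkHom_le_mkHom_iff] at hh
    exact mkHom_le_mkHom_iff.2 (by simpa only [Category.id_comp] using hh)

theorem isCommaP_kernel :
    IsCommaP (mkHom he : A ⟶ hI.toExObj) (mkHom he) (mkHom hk0) (mkHom hk1) := by
  refine ⟨(isCoinserterP_kernel hI he hK hk0 hk1).1, fun {W} u0 u1 hu => ?_,
    fun {W} w w' h0 h1 => ?_⟩
  · obtain ⟨u0, hu0, rfl⟩ := exists_eq_mkHom u0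
    obtain ⟨u1, hu1, rfl⟩ := exists_eq_mkHom u1
    rw [mkHom_comp_mkHom, mkHom_comp_mkHom, mkHom_le_mkHom_iff] at hu
    obtain ⟨s, hs0, hs1⟩ := hu
    rw [Category.comp_id] at hs0 hs1
    have hs : Compat W hK.toExObj s := hK.rel_toExObj_iff.2 <| Fin.forall_fin_two.2
      ⟨by simpa [hs0] using compat_iff_rel.1 hu0, by simpa [hs1] using compat_iff_rel.1 hu1⟩
    exact ⟨mkHom hs, mkHom_comp_mkHom_of_eq _ _ _ hs0, mkHom_comp_mkHom_of_eq _ _ _ hs1⟩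
  · obtain ⟨w, hw, rfl⟩ := exists_eq_mkHom w
    obtain ⟨w', hw', rfl⟩ := exists_eq_mkHom w'
    rw [mkHom_comp_mkHom, mkHom_comp_mkHom, mkHom_le_mkHom_iff] at h0 h1
    exact hK.rel_toExObj_iff.2 (Fin.forall_fin_two.2 ⟨h0, h1⟩)

end Kernel

end ExObj

open ExObj

/-- every morphism of the exact completion factors as an so-morphism
(an effective epimorphism, the coinserter of its kernel congruence) followed by an
order-monomorphism. -/
theorem statement7 {C : Type u} [Category.{v} C] [PosEnriched C] (hC : WeaklyLex C)
    (A B : ExObj C) (f : A ⟶ B) :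
    ∃ (I : ExObj C) (e : A ⟶ I) (m : I ⟶ B), e ≫ m = f ∧
      PosEnr.IsSo e ∧ PosEnr.OrderMono m ∧
      ∃ (K : ExObj C) (k0 k1 : K ⟶ A),
        PosEnr.IsCommaP e e k0 k1 ∧ PosEnr.IsCoinserterP k0 k1 e := by
  obtain ⟨f, hf, rfl⟩ := exists_eq_mkHom f
  obtain ⟨L, l0, l1, hI⟩ := hC.exists_isWeakComap B (fun _ : Unit => f)
  obtain ⟨KR, m0, m1, hK⟩ := hC.exists_isWeakComap A ![l0, l1]
  have he := hI.compat_id fun _ => hf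
  have hcoins := isCoinserterP_kernel hI he hK (hK.compat_toExObj 0) (hK.compat_toExObj 1)
  refine ⟨hI.toExObj, mkHom he, mkHom (hI.compat_toExObj ()), ?_, hcoins.isSo,
    hI.orderMono_mkHom, hK.toExObj, _, _, isCommaP_kernel hI he hK _ _, hcoins⟩
  exact mkHom_comp_mkHom_of_eq _ _ _ (Category.id_comp f)
end

section
/- For every object (X,R) of the exact completion C_ex of a weakly lex Pos-enriched category C, the diagram ΓR ⇉ ΓX → (X,R), with the parallel pair Γr₀, Γr₁ and the morphism [1_X], is a coinserter in C_ex. Consequently every morphism of C_ex fits in a commutative square whose rows are such coinserters of objects in the image of Γ. -/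
open CategoryTheory

universe w v u v' u' v'' u''

open PosEnr

/-! ## The exact completion -/

open PosEnr

namespace ExObj

variable {C : Type u} [Category.{v} C] [PosEnriched C]

theorem mk_eq_mk_of_val_eq {A B : ExObj C} {f g : {f : A.X ⟶ B.X // Compat A B f}}
    (h : f.1 = g.1) : (Quotient.mk (exSetoid A B) f : A ⟶ B) = Quotient.mk _ g :=
  congrArg _ (Subtype.ext h)

section Gamma

variable (I : C → C) (i0 i1 : ∀ X : C, I X ⟶ X) (hle : ∀ X, i0 X ≤ i1 X)
  (hfac : ∀ (X : C) {A : C} (a0 a1 : A ⟶ X), a0 ≤ a1 →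
    ∃ u : A ⟶ I X, u ≫ i0 X = a0 ∧ u ≫ i1 X = a1)

local notation "Γ" => GammaFunc I i0 i1 hle hfac

local notation "q" => exQuot I i0 i1 hle hfac

theorem map_r0_comp_exQuot_le (A : ExObj C) :
    (Γ).map A.r0 ≫ q A ≤ (Γ).map A.r1 ≫ q A :=
  ⟨𝟙 A.R, (Category.id_comp _).trans (Category.comp_id _).symm,
    (Category.id_comp _).trans (Category.comp_id _).symm⟩

/-- Since `Pre` only involves the codomain, the coinserter inequality for `[f] : Γ X ⟶ Z`
says exactly that `f` is compatible with `R`. -/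
theorem compat_of_map_r0_comp_le_map_r1_comp (A : ExObj C) {Z : ExObj C}
    (f : {f : A.X ⟶ Z.X // Compat ((Γ).obj A.X) Z f})
    (h : (Γ).map A.r0 ≫ Quotient.mk _ f ≤ (Γ).map A.r1 ≫ Quotient.mk _ f) :
    Compat A Z f.1 :=
  h

theorem exQuot_comp_mk {A B : ExObj C} (f : {f : A.X ⟶ B.X // Compat A B f}) :
    q A ≫ Quotient.mk _ f = (Γ).map f.1 ≫ q B :=
  mk_eq_mk_of_val_eq ((Category.id_comp _).trans (Category.comp_id _).symm)

theorem exQuot_comp_le_exQuot_comp_iff {A Z : ExObj C} (h h' : A ⟶ Z) :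
    q A ≫ h ≤ q A ≫ h' ↔ h ≤ h' := by
  induction h using Quotient.inductionOn with | h f =>
  induction h' using Quotient.inductionOn with | h g =>
  change Pre _ Z (𝟙 A.X ≫ f.1) (𝟙 A.X ≫ g.1) ↔ Pre A Z f.1 g.1
  simp only [Category.id_comp]

theorem exists_exQuot_comp_eq {A Z : ExObj C} (h : (Γ).obj A.X ⟶ Z)
    (hh : (Γ).map A.r0 ≫ h ≤ (Γ).map A.r1 ≫ h) : ∃ t : A ⟶ Z, q A ≫ t = h := by
  induction h using Quotient.inductionOn with | h f =>
  exact ⟨Quotient.mk _ ⟨f.1, compat_of_map_r0_comp_le_map_r1_comp I i0 i1 hle hfac A f hh⟩,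
    mk_eq_mk_of_val_eq (Category.id_comp _)⟩

theorem isCoinserterP_exQuot (A : ExObj C) :
    IsCoinserterP ((Γ).map A.r0) ((Γ).map A.r1) (q A) :=
  ⟨map_r0_comp_exQuot_le I i0 i1 hle hfac A, fun h => exists_exQuot_comp_eq I i0 i1 hle hfac h,
    fun h h' => (exQuot_comp_le_exQuot_comp_iff I i0 i1 hle hfac h h').1⟩

end Gamma

end ExObj

theorem statement12_general {C : Type u} [Category.{v} C] [PosEnriched C]
    (I : C → C) (i0 i1 : ∀ X : C, I X ⟶ X) (hle : ∀ X, i0 X ≤ i1 X)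
    (hfac : ∀ (X : C) {A : C} (a0 a1 : A ⟶ X), a0 ≤ a1 →
      ∃ u : A ⟶ I X, u ≫ i0 X = a0 ∧ u ≫ i1 X = a1) (A : ExObj C) :
    PosEnr.IsCoinserterP ((ExObj.GammaFunc I i0 i1 hle hfac).map A.r0) ((ExObj.GammaFunc I i0 i1 hle hfac).map A.r1)
      (ExObj.exQuot I i0 i1 hle hfac A) ∧
    (∀ (B : ExObj C) (φ : A ⟶ B), ∃ (f : A.X ⟶ B.X) (fb : A.R ⟶ B.R),
      fb ≫ B.r0 = A.r0 ≫ f ∧ fb ≫ B.r1 = A.r1 ≫ f ∧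
      ExObj.exQuot I i0 i1 hle hfac A ≫ φ = (ExObj.GammaFunc I i0 i1 hle hfac).map f ≫ ExObj.exQuot I i0 i1 hle hfac B) := by
  refine ⟨ExObj.isCoinserterP_exQuot I i0 i1 hle hfac A, fun B φ => ?_⟩
  induction φ using Quotient.inductionOn with | h f =>
  obtain ⟨fb, h0, h1⟩ := f.2
  exact ⟨f.1, fb, h0, h1, ExObj.exQuot_comp_mk I i0 i1 hle hfac f⟩

/-- `Γ R ⇉ Γ X → (X,R)` is a coinserter in `C_ex`, and every morphism of
`C_ex` fits in a commutative square whose rows are such coinserters. -/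
theorem statement12 {C : Type u} [Category.{v} C] [PosEnriched C] (hC : WeaklyLex C)
    (I : C → C) (i0 i1 : ∀ X : C, I X ⟶ X) (hle : ∀ X, i0 X ≤ i1 X)
    (hfac : ∀ (X : C) {A : C} (a0 a1 : A ⟶ X), a0 ≤ a1 →
      ∃ u : A ⟶ I X, u ≫ i0 X = a0 ∧ u ≫ i1 X = a1) (A : ExObj C) :
    PosEnr.IsCoinserterP ((ExObj.GammaFunc I i0 i1 hle hfac).map A.r0) ((ExObj.GammaFunc I i0 i1 hle hfac).map A.r1)
      (ExObj.exQuot I i0 i1 hle hfac A) ∧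
    (∀ (B : ExObj C) (φ : A ⟶ B), ∃ (f : A.X ⟶ B.X) (fb : A.R ⟶ B.R),
      fb ≫ B.r0 = A.r0 ≫ f ∧ fb ≫ B.r1 = A.r1 ≫ f ∧
      ExObj.exQuot I i0 i1 hle hfac A ≫ φ = (ExObj.GammaFunc I i0 i1 hle hfac).map f ≫ ExObj.exQuot I i0 i1 hle hfac B) :=
  statement12_general I i0 i1 hle hfac A
end

section
/- A Pos-enriched functor F : C → E from a weakly lex category C to a regular category E which is left covering with respect to finite products and inserters is left covering with respect to all finite weighted limits. -/
open CategoryTheory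

universe w v u v' u' v'' u''

open PosEnr

/-! ## The exact completion -/

open PosEnr

/-!
A finite weighted limit of `G` is cut out of the product of the `G d`, one factor for each
`x : W d`, by finitely many inequalities (naturality and monotonicity of a cylinder), each imposed
by an inserter. Build the weak version in `C` and the strong one in `E` side by side. The
comparison starts as the covering map into the product of the `F (G d)`; at each inserter step it
becomes the covering map given for inserters followed by a pullback of the previous comparison.
In the regular category `E`, so morphisms are stable under pullback and composition, and they are
effective epimorphisms.
-/

namespace PosEnr

section Morphisms

variable {C : Type u} [Category.{v} C] [PosEnriched C]

theorem orderMono_id (X : C) : OrderMono (𝟙 X) := fun u v h => by simpa using h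

theorem OrderMono.comp {X Y Z : C} {f : X ⟶ Y} {g : Y ⟶ Z} (hf : OrderMono f)
    (hg : OrderMono g) : OrderMono (f ≫ g) :=
  fun u v h => hf u v (hg _ _ (by simpa using h))

theorem OrderMono.eq_of_comp_eq {X Y Z : C} {m : X ⟶ Y} (hm : OrderMono m) {u v : Z ⟶ X}
    (h : u ≫ m = v ≫ m) : u = v :=
  le_antisymm (hm u v h.le) (hm v u h.ge)

theorem IsSo.comp {X Y Z : C} {f : X ⟶ Y} {g : Y ⟶ Z} (hf : IsSo f) (hg : IsSo g) :
    IsSo (f ≫ g) := by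
  intro A B m hm
  refine ⟨fun a b hab => ?_, fun h h' hle hm' => ?_⟩
  · obtain ⟨h₁, h₁l, h₁r⟩ := (hf m hm).1 a (g ≫ b) (by rw [hab, Category.assoc])
    obtain ⟨h₂, h₂l, h₂r⟩ := (hg m hm).1 h₁ b h₁r
    exact ⟨h₂, by rw [Category.assoc, h₂l, h₁l], h₂r⟩
  · refine (hg m hm).2 h h' ((hf m hm).2 (g ≫ h) (g ≫ h') ?_ ?_) hm'
    · simpa using hle
    · simpa using comp_mono' (le_refl g) hm'

theorem IsSo.of_comp {X Y Z : C} {u : X ⟶ Y} {h : Y ⟶ Z} (hs : IsSo (u ≫ h)) : IsSo h := by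
  intro A B m hm
  refine ⟨fun f g hfg => ?_, fun a b hle hmle => (hs m hm).2 a b ?_ hmle⟩
  · obtain ⟨d, hd₁, hd₂⟩ := (hs m hm).1 (u ≫ f) g (by rw [Category.assoc, hfg, Category.assoc])
    exact ⟨d, hm.eq_of_comp_eq (by rw [Category.assoc, hd₂, hfg]), hd₂⟩
  · simpa using comp_mono' (le_refl u) hle

theorem isSo_of_isIso {X Y : C} (e : X ⟶ Y) [IsIso e] : IsSo e := by
  intro A B m hm
  refine ⟨fun f g hfg => ⟨inv e ≫ f, by simp, by rw [Category.assoc, hfg, IsIso.inv_hom_id_assoc]⟩,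
    fun a b hle _ => ?_⟩
  simpa using comp_mono' (le_refl (inv e)) hle

theorem IsSo.isIso_of_orderMono {X Y : C} {e : X ⟶ Y} (he : IsSo e) (hm : OrderMono e) :
    IsIso e := by
  obtain ⟨w, hw₁, hw₂⟩ := (he e hm).1 (𝟙 X) (𝟙 Y) (by simp)
  exact ⟨w, hw₁, hw₂⟩

theorem EffectiveEpiP.isSo {X Y : C} {e : X ⟶ Y} (he : EffectiveEpiP e) : IsSo e := by
  obtain ⟨R, u, v, huv, hfac, hepi⟩ := he
  intro A B m hm
  refine ⟨fun f g hfg => ?_, fun a b hle _ => hepi a b hle⟩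
  obtain ⟨t, ht⟩ := hfac f (hm _ _ (by simpa [hfg] using comp_mono' huv (le_refl g)))
  have hte : e ≫ t ≫ m = e ≫ g := by rw [← Category.assoc, ht, hfg]
  exact ⟨t, ht, le_antisymm (hepi _ _ hte.le) (hepi _ _ hte.ge)⟩

end Morphisms

section Shapes

open Limits

abbrev discreteOrder (α : Type*) : PartialOrder α where
  le := Eq
  le_refl := Eq.refl
  le_trans _ _ _ := Eq.trans
  le_antisymm _ _ h _ := h

abbrev _root_.PosEnriched.discrete (D : Type u) [Category.{v} D] : PosEnriched D where
  homOrder _ _ := discreteOrder _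
  comp_mono {_ _ _ _ _ _ _} h h' := by
    change _ = _ at h h'
    subst h h'
    rfl

instance (ι : Type) : PosEnriched (Discrete ι) := .discrete _

instance : PosEnriched WalkingParallelPair := .discrete _

def productWeight (ι : Type) : PosWeight (Discrete ι) where
  obj _ := PUnit
  po _ := inferInstance
  map _ x := x
  map_monotone _ _ _ h := h
  map_id _ _ := rfl
  map_comp _ _ _ := rfl
  map_le _ _ := le_rfl

theorem productWeight_isFiniteWeight (ι : Type) [Finite ι] :
    (productWeight ι).IsFiniteWeight :=
  ⟨Finite.of_equiv ι discreteEquiv.symm, fun _ _ => inferInstance,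
    fun _ => (inferInstance : Finite PUnit.{1})⟩

/-- `Bool = {false ≤ true}` at `one`, with `left ↦ false` and `right ↦ true`: a cylinder for
this weight on `parallelPair f g` is a map `u` with `u ≫ f ≤ u ≫ g`. -/
def inserterWeight : PosWeight WalkingParallelPair where
  obj
    | .zero => PUnit
    | .one => Bool
  po
    | .zero => inferInstance
    | .one => inferInstance
  map
    | .left => fun _ => false
    | .right => fun _ => true
    | .id _ => id
  map_monotone {d d'} f x y h := by
    change WalkingParallelPairHom d d' at f
    cases f <;> first | exact h | exact le_rfl
  map_id _ _ := rfl
  map_comp {d d' d''} f g x := by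
    change WalkingParallelPairHom d d' at f
    change WalkingParallelPairHom d' d'' at g
    cases f <;> cases g <;> rfl
  map_le {_ d'} f g h x := by
    change f = g at h
    subst h
    cases d' <;> exact le_rfl

theorem inserterWeight_isFiniteWeight : inserterWeight.IsFiniteWeight := by
  refine ⟨inferInstance, fun _ _ => inferInstance, ?_⟩
  rintro (_ | _)
  · exact (inferInstance : Finite PUnit.{1})
  · exact (inferInstance : Finite Bool)

variable {C : Type u} [Category.{v} C] [PosEnriched C]

def productDiagram {ι : Type} (X : ι → C) : PosFunctor (Discrete ι) C where
  toFunctor := Discrete.functor X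
  map_le {_ _ f g} _ := by
    cases Subsingleton.elim f g
    exact le_rfl

def productCylinder {ι : Type} (X : ι → C) {Z : C} (f : ∀ i, Z ⟶ X i) :
    Cylinder (productWeight ι) (productDiagram X) Z where
  app d _ := f d.as
  monotone _ _ _ _ := le_rfl
  naturality {d d'} g x := by
    obtain ⟨i⟩ := d
    obtain ⟨i'⟩ := d'
    obtain rfl : i = i' := Discrete.eq_of_hom g
    cases Subsingleton.elim g (𝟙 _)
    simp [productDiagram]

theorem exists_isWeakProdFam (hC : WeaklyLex C) (ι : Type) [Finite ι] (X : ι → C) :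
    ∃ (P : C) (p : ∀ i, P ⟶ X i), IsWeakProdFam X P p := by
  obtain ⟨L, c, hc⟩ := hC _ _ (productDiagram X) (productWeight_isFiniteWeight ι)
  refine ⟨L, fun i => c.app ⟨i⟩ ⟨⟩, fun f => ?_⟩
  obtain ⟨h, hh⟩ := hc _ (productCylinder X f)
  exact ⟨h, fun i => hh ⟨i⟩ ⟨⟩⟩

theorem exists_isProdFamP (hC : HasFiniteWeightedLimitsP C) (ι : Type) [Finite ι] (X : ι → C) :
    ∃ (P : C) (p : ∀ i, P ⟶ X i), IsProdFamP X P p := by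
  obtain ⟨L, c, hc⟩ := hC _ _ (productDiagram X) (productWeight_isFiniteWeight ι)
  refine ⟨L, fun i => c.app ⟨i⟩ ⟨⟩, fun f => ?_, fun h h' hle => hc.2 _ h h' ?_⟩
  · obtain ⟨h, hh⟩ := hc.1 _ (productCylinder X f)
    exact ⟨h, fun i => hh ⟨i⟩ ⟨⟩⟩
  · rintro ⟨i⟩ ⟨⟩
    exact hle i

def inserterDiagram {X Y : C} (f g : X ⟶ Y) : PosFunctor WalkingParallelPair C where
  toFunctor := parallelPair f g
  map_le {_ _ a b} h := by
    change a = b at h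
    subst h
    exact le_rfl

def inserterCylinder {X Y : C} (f g : X ⟶ Y) {Z : C} (u : Z ⟶ X) (h : u ≫ f ≤ u ≫ g) :
    Cylinder inserterWeight (inserterDiagram f g) Z where
  app
    | .zero => fun _ => u
    | .one => fun b => cond b (u ≫ g) (u ≫ f)
  monotone
    | .zero, _, _, _ => le_rfl
    | .one, false, false, _ => le_rfl
    | .one, false, true, _ => h
    | .one, true, false, hxy => absurd hxy (show ¬ (true ≤ false) by decide)
    | .one, true, true, _ => le_rfl
  naturality
    | .id _, _ => Category.comp_id _
    | .left, _ => rfl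
    | .right, _ => rfl

theorem Cylinder.inserter_app_one {X Y : C} {f g : X ⟶ Y} {Z : C}
    (c : Cylinder inserterWeight (inserterDiagram f g) Z) :
    c.app .zero ⟨⟩ ≫ f = c.app .one false ∧ c.app .zero ⟨⟩ ≫ g = c.app .one true :=
  ⟨c.naturality .left ⟨⟩, c.naturality .right ⟨⟩⟩

theorem Cylinder.inserter_le {X Y : C} {f g : X ⟶ Y} {Z : C}
    (c : Cylinder inserterWeight (inserterDiagram f g) Z) :
    c.app .zero ⟨⟩ ≫ f ≤ c.app .zero ⟨⟩ ≫ g := by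
  rw [c.inserter_app_one.1, c.inserter_app_one.2]
  exact c.monotone .one false true (Bool.false_le _)

theorem exists_isWeakInserter (hC : WeaklyLex C) {X Y : C} (f g : X ⟶ Y) :
    ∃ (I : C) (e : I ⟶ X), IsWeakInserter f g e := by
  obtain ⟨L, c, hc⟩ := hC _ _ (inserterDiagram f g) inserterWeight_isFiniteWeight
  refine ⟨L, c.app .zero ⟨⟩, c.inserter_le, fun z hz => ?_⟩
  obtain ⟨h, hh⟩ := hc _ (inserterCylinder f g z hz)
  exact ⟨h, hh .zero ⟨⟩⟩

theorem exists_isInserterP (hC : HasFiniteWeightedLimitsP C) {X Y : C} (f g : X ⟶ Y) :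
    ∃ (I : C) (e : I ⟶ X), IsInserterP f g e := by
  obtain ⟨L, c, hc⟩ := hC _ _ (inserterDiagram f g) inserterWeight_isFiniteWeight
  refine ⟨L, c.app .zero ⟨⟩, c.inserter_le, fun z hz => ?_, fun u v huv => hc.2 _ u v ?_⟩
  · obtain ⟨h, hh⟩ := hc.1 _ (inserterCylinder f g z hz)
    exact ⟨h, hh .zero ⟨⟩⟩
  · rintro (_ | _) x
    · exact huv
    · cases x
      · rw [← c.inserter_app_one.1]
        exact ((Category.assoc _ _ _).symm.trans_le (comp_mono' huv (le_refl f))).trans_eq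
          (Category.assoc _ _ _)
      · rw [← c.inserter_app_one.2]
        exact ((Category.assoc _ _ _).symm.trans_le (comp_mono' huv (le_refl g))).trans_eq
          (Category.assoc _ _ _)

end Shapes

section FiniteLimits

variable {C : Type u} [Category.{v} C] [PosEnriched C]

theorem exists_isBinProdP (hC : HasFiniteWeightedLimitsP C) (X Y : C) :
    ∃ (P : C) (p : P ⟶ X) (q : P ⟶ Y), IsBinProdP p q := by
  obtain ⟨P, p, hp⟩ := exists_isProdFamP hC Bool fun b => Bool.casesOn b X Y
  refine ⟨P, p false, p true, fun f g => ?_, fun h h' h₀ h₁ => hp.2 h h' ?_⟩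
  · obtain ⟨h, hh⟩ := hp.1 fun b => Bool.casesOn b f g
    exact ⟨h, hh false, hh true⟩
  · rintro (_ | _)
    exacts [h₀, h₁]

theorem exists_isCommaP (hC : HasFiniteWeightedLimitsP C) {X Y Z : C} (f : X ⟶ Z)
    (g : Y ⟶ Z) : ∃ (P : C) (c₀ : P ⟶ X) (c₁ : P ⟶ Y), IsCommaP f g c₀ c₁ := by
  obtain ⟨Q, p₀, p₁, hQ⟩ := exists_isBinProdP hC X Y
  obtain ⟨K, e, he, hfac, hmono⟩ := exists_isInserterP hC (p₀ ≫ f) (p₁ ≫ g)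
  refine ⟨K, e ≫ p₀, e ≫ p₁, by simpa using he, fun u₀ u₁ hu => ?_,
    fun w w' h₀ h₁ => hmono w w' (hQ.2 _ _ (by simpa using h₀) (by simpa using h₁))⟩
  obtain ⟨w, hw₀, hw₁⟩ := hQ.1 u₀ u₁
  obtain ⟨t, ht⟩ := hfac w (by simpa [reassoc_of% hw₀, reassoc_of% hw₁] using hu)
  exact ⟨t, by rw [← Category.assoc, ht, hw₀], by rw [← Category.assoc, ht, hw₁]⟩

/-- The pullback is the double inserter of `(p₀ ≫ f, p₁ ≫ g)` and `(p₁ ≫ g, p₀ ≫ f)`. -/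
theorem exists_isPullbackP (hC : HasFiniteWeightedLimitsP C) {X Y Z : C} (f : X ⟶ Z)
    (g : Y ⟶ Z) : ∃ (P : C) (p₀ : P ⟶ X) (p₁ : P ⟶ Y), IsPullbackP f g p₀ p₁ := by
  obtain ⟨Q, p₀, p₁, hQ⟩ := exists_isBinProdP hC X Y
  obtain ⟨K₁, e₁, he₁, hfac₁, hmono₁⟩ := exists_isInserterP hC (p₀ ≫ f) (p₁ ≫ g)
  obtain ⟨K₂, e₂, he₂, hfac₂, hmono₂⟩ :=
    exists_isInserterP hC (e₁ ≫ p₁ ≫ g) (e₁ ≫ p₀ ≫ f)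
  refine ⟨K₂, e₂ ≫ e₁ ≫ p₀, e₂ ≫ e₁ ≫ p₁, ?_, fun u₀ u₁ hu => ?_, fun w w' h₀ h₁ => ?_⟩
  · simp only [Category.assoc] at he₁ he₂ ⊢
    exact le_antisymm (comp_mono' le_rfl he₁) he₂
  · obtain ⟨w, hw₀, hw₁⟩ := hQ.1 u₀ u₁
    obtain ⟨t₁, ht₁⟩ := hfac₁ w (by simp [reassoc_of% hw₀, reassoc_of% hw₁, hu])
    obtain ⟨t₂, ht₂⟩ := hfac₂ t₁ (by simp [reassoc_of% ht₁, reassoc_of% hw₀,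
      reassoc_of% hw₁, hu])
    exact ⟨t₂, by simp [reassoc_of% ht₂, reassoc_of% ht₁, hw₀],
      by simp [reassoc_of% ht₂, reassoc_of% ht₁, hw₁]⟩
  · exact hmono₂ w w' (hmono₁ _ _ (hQ.2 _ _ (by simpa using h₀) (by simpa using h₁)))

/-- Factor `(h, h')` through the order-mono inserter of the two projections `Z × Z ⟶ Z`,
and lift along `e`. -/
theorem IsSo.le_of_comp_le (hC : HasFiniteWeightedLimitsP C) {X Y Z : C} {e : X ⟶ Y}
    (he : IsSo e) {h h' : Y ⟶ Z} (hle : e ≫ h ≤ e ≫ h') : h ≤ h' := by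
  obtain ⟨Q, p₀, p₁, hQ⟩ := exists_isBinProdP hC Z Z
  obtain ⟨K, i, hi, hfac, hmono⟩ := exists_isInserterP hC p₀ p₁
  obtain ⟨w, hw₀, hw₁⟩ := hQ.1 h h'
  obtain ⟨φ, hφ⟩ := hfac (e ≫ w) (by simpa [hw₀, hw₁] using hle)
  obtain ⟨d, -, hd⟩ := (he i hmono).1 φ w hφ
  calc h = d ≫ i ≫ p₀ := by rw [← Category.assoc, hd, hw₀]
    _ ≤ d ≫ i ≫ p₁ := comp_mono' le_rfl hi
    _ = h' := by rw [← Category.assoc, hd, hw₁]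

end FiniteLimits

section Regular

variable {C : Type u} [Category.{v} C] [PosEnriched C]

theorem IsSo.exists_cover (hC : IsRegularCat C) {X M A : C} {s : X ⟶ M} (hs : IsSo s)
    (u : A ⟶ M) : ∃ (B : C) (a : B ⟶ A) (x : B ⟶ X), IsSo a ∧ x ≫ s = a ≫ u := by
  obtain ⟨B, x, a, hpb⟩ := exists_isPullbackP hC.1 s u
  exact ⟨B, a, x, hC.2.2 s u x a hpb hs, hpb.1⟩

theorem IsSo.exists_cover₂ (hC : IsRegularCat C) {X M A : C} {s : X ⟶ M} (hs : IsSo s)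
    (u v : A ⟶ M) : ∃ (B : C) (a : B ⟶ A) (x₀ x₁ : B ⟶ X),
      IsSo a ∧ x₀ ≫ s = a ≫ u ∧ x₁ ≫ s = a ≫ v := by
  obtain ⟨B, a, x₀, ha, hx₀⟩ := hs.exists_cover hC u
  obtain ⟨B', a', x₁, ha', hx₁⟩ := hs.exists_cover hC (a ≫ v)
  exact ⟨B', a' ≫ a, a' ≫ x₀, x₁, ha'.comp ha, by simp [hx₀], by simp [hx₁]⟩

/-- Factor `⟨e, h⟩ : X ⟶ Y × Z` as an so `s` followed by an order-mono `m`; then `m ≫ pY`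
is so (as `s ≫ m ≫ pY = e`) and order-mono (by covering generalized elements along `s`),
hence an isomorphism. -/
theorem IsSo.exists_comp_eq (hC : IsRegularCat C) {X Y Z : C} {e : X ⟶ Y} (he : IsSo e)
    (h : X ⟶ Z) (hh : ∀ {B : C} (x₀ x₁ : B ⟶ X), x₀ ≫ e ≤ x₁ ≫ e → x₀ ≫ h ≤ x₁ ≫ h) :
    ∃ t : Y ⟶ Z, e ≫ t = h := by
  obtain ⟨P, pY, pZ, hP⟩ := exists_isBinProdP hC.1 Y Z
  obtain ⟨eh, heY, hhZ⟩ := hP.1 e h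
  obtain ⟨M, s, m, hs, hm, hsm⟩ := hC.2.1 eh
  have hsY : s ≫ m ≫ pY = e := by rw [← Category.assoc, hsm, heY]
  have hsZ : s ≫ m ≫ pZ = h := by rw [← Category.assoc, hsm, hhZ]
  have hmY : OrderMono (m ≫ pY) := by
    intro A u v huv
    obtain ⟨B, a, x₀, x₁, ha, hx₀, hx₁⟩ := hs.exists_cover₂ hC u v
    have hx : x₀ ≫ e ≤ x₁ ≫ e := by
      simpa [← hsY, reassoc_of% hx₀, reassoc_of% hx₁] using comp_mono' (le_refl a) huv
    have hZ : u ≫ m ≫ pZ ≤ v ≫ m ≫ pZ :=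
      ha.le_of_comp_le hC.1 (by simpa [← hsZ, reassoc_of% hx₀, reassoc_of% hx₁] using hh _ _ hx)
    exact hm u v (hP.2 _ _ (by simpa using huv) (by simpa using hZ))
  have hmYso : IsSo (m ≫ pY) := IsSo.of_comp (u := s) (by rwa [hsY])
  have := hmYso.isIso_of_orderMono hmY
  exact ⟨inv (m ≫ pY) ≫ m ≫ pZ, by rw [← hsY, Category.assoc, IsIso.hom_inv_id_assoc, hsZ]⟩

theorem IsSo.effectiveEpiP (hC : IsRegularCat C) {X Y : C} {e : X ⟶ Y} (he : IsSo e) :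
    EffectiveEpiP e := by
  obtain ⟨K, c₀, c₁, hK⟩ := exists_isCommaP hC.1 e e
  refine ⟨K, c₀, c₁, hK.1, fun h hh => he.exists_comp_eq hC h fun x₀ x₁ hx => ?_,
    fun h h' => he.le_of_comp_le hC.1⟩
  obtain ⟨w, rfl, rfl⟩ := hK.2.1 x₀ x₁ hx
  simpa using comp_mono' (le_refl w) hh

end Regular

section Inserters

variable {C : Type u} [Category.{v} C] [PosEnriched C]

def IsMultiInserterP {J : Type*} {X I : C} {Y : J → C} (s : Set J) (f g : ∀ j, X ⟶ Y j)
    (e : I ⟶ X) : Prop :=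
  OrderMono e ∧ (∀ j ∈ s, e ≫ f j ≤ e ≫ g j) ∧
    ∀ {Z : C} (h : Z ⟶ X), (∀ j ∈ s, h ≫ f j ≤ h ≫ g j) → ∃ u : Z ⟶ I, u ≫ e = h

theorem isMultiInserterP_empty {J : Type*} {X : C} {Y : J → C} (f g : ∀ j, X ⟶ Y j) :
    IsMultiInserterP ∅ f g (𝟙 X) :=
  ⟨orderMono_id X, by simp, fun h _ => ⟨h, Category.comp_id h⟩⟩

theorem IsMultiInserterP.insert {J : Type*} {X I I' : C} {Y : J → C} {s : Set J}
    {f g : ∀ j, X ⟶ Y j} {e : I ⟶ X} (he : IsMultiInserterP s f g e) {j : J} {e' : I' ⟶ I}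
    (he' : IsInserterP (e ≫ f j) (e ≫ g j) e') : IsMultiInserterP (insert j s) f g (e' ≫ e) := by
  refine ⟨OrderMono.comp he'.2.2 he.1, ?_, fun h hh => ?_⟩
  · rintro i (rfl | hi)
    · simpa using he'.1
    · simpa using comp_mono' (le_refl e') (he.2.1 i hi)
  · obtain ⟨u, rfl⟩ := he.2.2 h fun i hi => hh i (Set.mem_insert_of_mem j hi)
    obtain ⟨u', rfl⟩ := he'.2.1 u (by simpa using hh j (Set.mem_insert j s))
    exact ⟨u', (Category.assoc _ _ _).symm⟩

theorem isPullbackP_of_isInserterP {A S T S' I : C} (κ : A ⟶ S) {f g : S ⟶ T} {σ : S' ⟶ S}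
    (hσ : IsInserterP f g σ) {i : I ⟶ A} (hi : IsInserterP (κ ≫ f) (κ ≫ g) i)
    {ρ : I ⟶ S'} (hρ : ρ ≫ σ = i ≫ κ) : IsPullbackP κ σ i ρ := by
  refine ⟨hρ.symm, fun u₀ u₁ hu => ?_, fun w w' h₀ _ => hi.2.2 w w' h₀⟩
  obtain ⟨w, hw⟩ := hi.2.1 u₀ (by simpa [reassoc_of% hu] using comp_mono' (le_refl u₁) hσ.1)
  exact ⟨w, hw, OrderMono.eq_of_comp_eq hσ.2.2 (by simp [hρ, reassoc_of% hw, hu])⟩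

end Inserters

end PosEnr

open PosEnr

section LeftCovering

variable {C : Type u} {E : Type u'} [Category.{v} C] [Category.{v'} E]
  [PosEnriched C] [PosEnriched E]

def LeftCoveringProducts (F : PosFunctor C E) : Prop :=
  ∀ (ι : Type) (_ : Finite ι) (Xf : ι → C) (P : C) (p : ∀ i, P ⟶ Xf i),
    IsWeakProdFam Xf P p →
    ∀ (Q : E) (q : ∀ i, Q ⟶ F.toFunctor.obj (Xf i)),
      IsProdFamP (fun i => F.toFunctor.obj (Xf i)) Q q →
      ∀ h : F.toFunctor.obj P ⟶ Q, (∀ i, h ≫ q i = F.toFunctor.map (p i)) → EffectiveEpiP h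

def LeftCoveringInserters (F : PosFunctor C E) : Prop :=
  ∀ {X Y : C} (f g : X ⟶ Y) (E0 : C) (e : E0 ⟶ X), IsWeakInserter f g e →
    ∀ (I : E) (i : I ⟶ F.toFunctor.obj X),
      IsInserterP (F.toFunctor.map f) (F.toFunctor.map g) i →
      ∀ h : F.toFunctor.obj E0 ⟶ I, h ≫ i = F.toFunctor.map e → EffectiveEpiP h

variable {F : PosFunctor C E}

/-- The comparison `F N ⟶ I` into the inserter of `(F f, F g)` is covering by assumption, and
`I ⟶ S'` is a pullback of the so morphism `κ`. -/
theorem LeftCoveringInserters.exists_isSo_comp_eq (hins : LeftCoveringInserters F)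
    (hE : IsRegularCat E) {M Y N : C} {f g : M ⟶ Y} {e : N ⟶ M} (he : IsWeakInserter f g e)
    {S S' : E} {κ : F.toFunctor.obj M ⟶ S} (hκ : IsSo κ) {f' g' : S ⟶ F.toFunctor.obj Y}
    (hf : κ ≫ f' = F.toFunctor.map f) (hg : κ ≫ g' = F.toFunctor.map g) {σ : S' ⟶ S}
    (hσ : IsInserterP f' g' σ) :
    ∃ ρ : F.toFunctor.obj N ⟶ S', IsSo ρ ∧ ρ ≫ σ = F.toFunctor.map e ≫ κ := by
  obtain ⟨I, i, hi⟩ := exists_isInserterP hE.1 (F.toFunctor.map f) (F.toFunctor.map g)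
  obtain ⟨θ, hθ⟩ := hi.2.1 (F.toFunctor.map e) <| by
    simpa only [← F.toFunctor.map_comp] using F.map_le he.1
  have hθso : IsSo θ := (hins f g N e he I i hi θ hθ).isSo
  rw [← hf, ← hg] at hi
  obtain ⟨ρ, hρ⟩ := hσ.2.1 (i ≫ κ) (by simpa only [Category.assoc] using hi.1)
  have hρso : IsSo ρ := hE.2.2 _ _ _ _ (isPullbackP_of_isInserterP κ hσ hi hρ) hκ
  exact ⟨θ ≫ ρ, hθso.comp hρso, by rw [Category.assoc, hρ, ← Category.assoc, hθ]⟩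

theorem LeftCoveringInserters.exists_isSo_isMultiInserterP (hins : LeftCoveringInserters F)
    (hC : WeaklyLex C) (hE : IsRegularCat E) {J : Type*} {Y : J → C} {P : C}
    (a b : ∀ j, P ⟶ Y j) {Q : E} (a' b' : ∀ j, Q ⟶ F.toFunctor.obj (Y j))
    {k : F.toFunctor.obj P ⟶ Q} (hk : IsSo k) (ha : ∀ j, k ≫ a' j = F.toFunctor.map (a j))
    (hb : ∀ j, k ≫ b' j = F.toFunctor.map (b j)) {s : Set J} (hs : s.Finite) :
    ∃ (M : C) (μ : M ⟶ P) (S : E) (σ : S ⟶ Q) (κ : F.toFunctor.obj M ⟶ S),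
      IsSo κ ∧ κ ≫ σ = F.toFunctor.map μ ≫ k ∧ (∀ j ∈ s, μ ≫ a j ≤ μ ≫ b j) ∧
        IsMultiInserterP s a' b' σ := by
  induction s, hs using Set.Finite.induction_on with
  | empty => exact ⟨P, 𝟙 P, Q, 𝟙 Q, k, hk, by simp, by simp, isMultiInserterP_empty a' b'⟩
  | @insert j s _ _ ih =>
    obtain ⟨M, μ, S, σ, κ, hκ, hκσ, hμ, hσ⟩ := ih
    obtain ⟨N, e, he⟩ := exists_isWeakInserter hC (μ ≫ a j) (μ ≫ b j)
    obtain ⟨S', σ', hσ'⟩ := exists_isInserterP hE.1 (σ ≫ a' j) (σ ≫ b' j)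
    obtain ⟨ρ, hρ, hρσ⟩ := hins.exists_isSo_comp_eq hE he hκ
      (by simp [reassoc_of% hκσ, ha]) (by simp [reassoc_of% hκσ, hb]) hσ'
    refine ⟨N, e ≫ μ, S', σ' ≫ σ, ρ, hρ, by simp [reassoc_of% hρσ, hκσ], ?_, hσ.insert hσ'⟩
    rintro i (rfl | hi)
    · simpa using he.1
    · simpa using comp_mono' (le_refl e) (hμ i hi)

end LeftCovering

section CylinderIneq

variable {D : Type} [SmallCategory D] [PosEnriched D]

/-- The inequalities between components that make a family `π (d, x) : Z ⟶ G d` a cylinder: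
naturality, as two inequalities, and monotonicity in `x`. -/
inductive CylinderIneq (W : PosWeight D) : Type
  | naturality_le {d d' : D} (f : d ⟶ d') (x : W.obj d)
  | naturality_ge {d d' : D} (f : d ⟶ d') (x : W.obj d)
  | monotone {d : D} {x y : W.obj d} (h : x ≤ y)

namespace CylinderIneq

variable {W : PosWeight D}

instance [Finite D] [∀ d d' : D, Finite (d ⟶ d')] [∀ d, Finite (W.obj d)] :
    Finite (CylinderIneq W) := by
  let enum : (Σ d d' : D, (d ⟶ d') × W.obj d) ⊕ (Σ d d' : D, (d ⟶ d') × W.obj d) ⊕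
      (Σ d : D, {xy : W.obj d × W.obj d // xy.1 ≤ xy.2}) → CylinderIneq W
    | .inl ⟨_, _, f, x⟩ => naturality_le f x
    | .inr (.inl ⟨_, _, f, x⟩) => naturality_ge f x
    | .inr (.inr ⟨_, ⟨_, h⟩⟩) => monotone h
  refine Finite.of_surjective enum ?_
  rintro (⟨f, x⟩ | ⟨f, x⟩ | @⟨d, x, y, h⟩)
  exacts [⟨.inl ⟨_, _, f, x⟩, rfl⟩, ⟨.inr (.inl ⟨_, _, f, x⟩), rfl⟩,
    ⟨.inr (.inr ⟨d, ⟨(x, y), h⟩⟩), rfl⟩]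

def tgt : CylinderIneq W → D
  | naturality_le (d' := d') _ _ => d'
  | naturality_ge (d' := d') _ _ => d'
  | monotone (d := d) _ => d

variable {C : Type u} [Category.{v} C] [PosEnriched C] {G : PosFunctor D C}

def lhs {Z : C} (π : ∀ j : (d : D) × W.obj d, Z ⟶ G.toFunctor.obj j.1) :
    ∀ c : CylinderIneq W, Z ⟶ G.toFunctor.obj c.tgt
  | naturality_le f x => π ⟨_, x⟩ ≫ G.toFunctor.map f
  | naturality_ge f x => π ⟨_, W.map f x⟩
  | monotone (x := x) _ => π ⟨_, x⟩

def rhs {Z : C} (π : ∀ j : (d : D) × W.obj d, Z ⟶ G.toFunctor.obj j.1) :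
    ∀ c : CylinderIneq W, Z ⟶ G.toFunctor.obj c.tgt
  | naturality_le f x => π ⟨_, W.map f x⟩
  | naturality_ge f x => π ⟨_, x⟩ ≫ G.toFunctor.map f
  | monotone (y := y) _ => π ⟨_, y⟩

theorem comp_lhs {Z Z' : C} (μ : Z' ⟶ Z) (π : ∀ j : (d : D) × W.obj d, Z ⟶ G.toFunctor.obj j.1)
    (c : CylinderIneq W) : μ ≫ lhs π c = lhs (fun j => μ ≫ π j) c := by
  cases c <;> simp only [lhs, Category.assoc] <;> rfl

theorem comp_rhs {Z Z' : C} (μ : Z' ⟶ Z) (π : ∀ j : (d : D) × W.obj d, Z ⟶ G.toFunctor.obj j.1)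
    (c : CylinderIneq W) : μ ≫ rhs π c = rhs (fun j => μ ≫ π j) c := by
  cases c <;> simp only [rhs, Category.assoc] <;> rfl

variable {E : Type u'} [Category.{v'} E] [PosEnriched E] {F : PosFunctor C E}

theorem comp_lhs_eq_map {P : C} {p : ∀ j : (d : D) × W.obj d, P ⟶ G.toFunctor.obj j.1}
    {Q : E} {q : ∀ j : (d : D) × W.obj d, Q ⟶ F.toFunctor.obj (G.toFunctor.obj j.1)}
    {k : F.toFunctor.obj P ⟶ Q} (hk : ∀ j, k ≫ q j = F.toFunctor.map (p j))
    (c : CylinderIneq W) : k ≫ lhs (G := G.comp F) q c = F.toFunctor.map (lhs p c) := by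
  cases c with
  | naturality_le f x =>
    change k ≫ q ⟨_, x⟩ ≫ F.toFunctor.map (G.toFunctor.map f) =
      F.toFunctor.map (p ⟨_, x⟩ ≫ G.toFunctor.map f)
    rw [F.toFunctor.map_comp, reassoc_of% hk]
  | naturality_ge f x => exact hk _
  | monotone _ => exact hk _

theorem comp_rhs_eq_map {P : C} {p : ∀ j : (d : D) × W.obj d, P ⟶ G.toFunctor.obj j.1}
    {Q : E} {q : ∀ j : (d : D) × W.obj d, Q ⟶ F.toFunctor.obj (G.toFunctor.obj j.1)}
    {k : F.toFunctor.obj P ⟶ Q} (hk : ∀ j, k ≫ q j = F.toFunctor.map (p j))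
    (c : CylinderIneq W) : k ≫ rhs (G := G.comp F) q c = F.toFunctor.map (rhs p c) := by
  cases c with
  | naturality_le f x => exact hk _
  | naturality_ge f x =>
    change k ≫ q ⟨_, x⟩ ≫ F.toFunctor.map (G.toFunctor.map f) =
      F.toFunctor.map (p ⟨_, x⟩ ≫ G.toFunctor.map f)
    rw [F.toFunctor.map_comp, reassoc_of% hk]
  | monotone _ => exact hk _

end CylinderIneq

open CylinderIneq

variable {W : PosWeight D} {C : Type u} [Category.{v} C] [PosEnriched C] {G : PosFunctor D C}

def Cylinder.ofIneqs {Z : C} (π : ∀ j : (d : D) × W.obj d, Z ⟶ G.toFunctor.obj j.1)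
    (h : ∀ c, lhs π c ≤ rhs π c) : Cylinder W G Z where
  app d x := π ⟨d, x⟩
  monotone _ _ _ hxy := h (.monotone hxy)
  naturality f x := le_antisymm (h (.naturality_le f x)) (h (.naturality_ge f x))

theorem Cylinder.lhs_le_rhs {Z : C} (φ : Cylinder W G Z) (c : CylinderIneq W) :
    lhs (fun j => φ.app j.1 j.2) c ≤ rhs (fun j => φ.app j.1 j.2) c := by
  cases c with
  | naturality_le f x => exact (φ.naturality f x).le
  | naturality_ge f x => exact (φ.naturality f x).ge
  | monotone h => exact φ.monotone _ _ _ h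

theorem Cylinder.isWeightedLimitP_ofIneqs {Q S : C}
    {q : ∀ j : (d : D) × W.obj d, Q ⟶ G.toFunctor.obj j.1}
    (hq : IsProdFamP (fun j : (d : D) × W.obj d => G.toFunctor.obj j.1) Q q) {σ : S ⟶ Q}
    (hσ : IsMultiInserterP Set.univ (lhs q) (rhs q) σ) (h : ∀ c, lhs (fun j => σ ≫ q j) c ≤
      rhs (fun j => σ ≫ q j) c) :
    IsWeightedLimitP W G S (Cylinder.ofIneqs (fun j => σ ≫ q j) h) := by
  refine ⟨fun Z φ => ?_, fun Z h h' hle => hσ.1 h h' (hq.2 _ _ fun j =>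
    (Category.assoc _ _ _).trans_le ((hle j.1 j.2).trans_eq (Category.assoc _ _ _).symm))⟩
  obtain ⟨z, hz⟩ := hq.1 fun j => φ.app j.1 j.2
  obtain ⟨w, rfl⟩ := hσ.2.2 z fun c _ => by simpa [comp_lhs, comp_rhs, hz] using φ.lhs_le_rhs c
  exact ⟨w, fun d x => (Category.assoc _ _ _).symm.trans (hz ⟨d, x⟩)⟩

end CylinderIneq

section WeightedLimits

open CylinderIneq

variable {D : Type} [SmallCategory D] [PosEnriched D] {W : PosWeight D}
  {C : Type u} [Category.{v} C] [PosEnriched C] {G : PosFunctor D C}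

theorem IsWeightedLimitP.hom_ext {L : C} {c : Cylinder W G L} (hL : IsWeightedLimitP W G L c)
    {Z : C} {h h' : Z ⟶ L} (H : ∀ d x, h ≫ c.app d x = h' ≫ c.app d x) : h = h' :=
  le_antisymm (hL.2 _ _ _ fun d x => (H d x).le) (hL.2 _ _ _ fun d x => (H d x).ge)

theorem IsWeightedLimitP.isIso_of_comp_eq {L L' : C} {c : Cylinder W G L}
    {c' : Cylinder W G L'} (hL : IsWeightedLimitP W G L c) (hL' : IsWeightedLimitP W G L' c')
    {v : L ⟶ L'} (hv : ∀ d x, v ≫ c'.app d x = c.app d x) : IsIso v := by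
  obtain ⟨w, hw⟩ := hL.1 L' c'
  exact ⟨w, hL.hom_ext fun d x => by simp [hv, hw], hL'.hom_ext fun d x => by simp [hw, hv]⟩

variable {E : Type u'} [Category.{v'} E] [PosEnriched E] {F : PosFunctor C E}

theorem exists_isSo_comparison (hC : WeaklyLex C) (hE : IsRegularCat E)
    (hprod : LeftCoveringProducts F) (hins : LeftCoveringInserters F) (hW : W.IsFiniteWeight) :
    ∃ (M : C) (cM : Cylinder W G M) (S : E) (ψ : Cylinder W (G.comp F) S)
      (κ : F.toFunctor.obj M ⟶ S), IsWeightedLimitP W (G.comp F) S ψ ∧ IsSo κ ∧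
        ∀ d x, κ ≫ ψ.app d x = F.toFunctor.map (cM.app d x) := by
  obtain ⟨_, _, _⟩ := hW
  obtain ⟨P, p, hp⟩ :=
    exists_isWeakProdFam hC ((d : D) × W.obj d) fun j => G.toFunctor.obj j.1
  obtain ⟨Q, q, hq⟩ := exists_isProdFamP hE.1 ((d : D) × W.obj d) fun j =>
    F.toFunctor.obj (G.toFunctor.obj j.1)
  obtain ⟨k, hk⟩ := hq.1 fun j => F.toFunctor.map (p j)
  obtain ⟨M, μ, S, σ, κ, hκ, hκσ, hμ, hσ⟩ := hins.exists_isSo_isMultiInserterP hC hE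
    (lhs p) (rhs p) (lhs (G := G.comp F) q) (rhs (G := G.comp F) q)
    (hprod _ inferInstance _ P p hp Q q hq k hk).isSo (comp_lhs_eq_map hk) (comp_rhs_eq_map hk)
    Set.finite_univ
  have hψ (c : CylinderIneq W) : lhs (G := G.comp F) (fun j => σ ≫ q j) c ≤
      rhs (G := G.comp F) (fun j => σ ≫ q j) c := by
    exact (comp_lhs (G := G.comp F) σ q c).symm.trans_le
      ((hσ.2.1 c trivial).trans_eq (comp_rhs (G := G.comp F) σ q c))
  refine ⟨M, Cylinder.ofIneqs (fun j => μ ≫ p j) fun c => ?_, S, Cylinder.ofIneqs _ hψ, κ,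
    Cylinder.isWeightedLimitP_ofIneqs hq hσ hψ, hκ, fun d x => ?_⟩
  · simpa only [comp_lhs, comp_rhs] using hμ c trivial
  · change κ ≫ σ ≫ q ⟨d, x⟩ = F.toFunctor.map (μ ≫ p ⟨d, x⟩)
    rw [reassoc_of% hκσ, hk, F.toFunctor.map_comp]

end WeightedLimits

/-- a functor left covering with respect to finite products and inserters
is left covering with respect to all finite weighted limits. -/
theorem statement15 {C : Type u} {E : Type u'} [Category.{v} C] [Category.{v'} E]
    [PosEnriched C] [PosEnriched E] (hC : WeaklyLex C) (hE : IsRegularCat E)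
    (F : PosFunctor C E)
    (hprod : ∀ (ι : Type) (_ : Finite ι) (Xf : ι → C) (P : C) (p : ∀ i, P ⟶ Xf i),
      PosEnr.IsWeakProdFam Xf P p →
      ∀ (Q : E) (q : ∀ i, Q ⟶ F.toFunctor.obj (Xf i)),
        PosEnr.IsProdFamP (fun i => F.toFunctor.obj (Xf i)) Q q →
        ∀ h : F.toFunctor.obj P ⟶ Q, (∀ i, h ≫ q i = F.toFunctor.map (p i)) →
          PosEnr.EffectiveEpiP h)
    (hins : ∀ {X Y : C} (f g : X ⟶ Y) (E0 : C) (e : E0 ⟶ X),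
      PosEnr.IsWeakInserter f g e →
      ∀ (I : E) (i : I ⟶ F.toFunctor.obj X),
        PosEnr.IsInserterP (F.toFunctor.map f) (F.toFunctor.map g) i →
        ∀ h : F.toFunctor.obj E0 ⟶ I, h ≫ i = F.toFunctor.map e →
          PosEnr.EffectiveEpiP h) :
    LeftCovering F := by
  intro D _ _ W hW G L c hL L' c' hL' h hh
  obtain ⟨M, cM, S, ψ, κ, hS, hκ, hκψ⟩ :=
    exists_isSo_comparison (G := G) hC hE hprod hins hW
  obtain ⟨τ, hτ⟩ := hL M cM
  obtain ⟨v, hv⟩ := hL'.1 S ψ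
  have := hS.isIso_of_comp_eq hL' hv
  have hfac : F.toFunctor.map τ ≫ h = κ ≫ v := hL'.hom_ext fun d x => by
    rw [Category.assoc, hh, Category.assoc, hv, hκψ, ← hτ]
    exact (F.toFunctor.map_comp _ _).symm
  have hso : IsSo (F.toFunctor.map τ ≫ h) := hfac ▸ hκ.comp (isSo_of_isIso v)
  exact IsSo.effectiveEpiP hE (IsSo.of_comp hso)
end
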